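/- arXiv:1806.10660 — 2 statements merged into one kernel-verified Lean document; each statement's English description precedes it below -/
import Mathlib

section
/- Assume unit costs. Let j ∈ {1,…,B}, let π be a permutation of Fin n, let 1 ≤ l ≤ n − 1 be a position with p(π(l)) < p(π(l+1)), and let π' be the permutation obtained from π by swapping the entries in positions l and l+1. Then C₁^j(π') ≤ C₁^j(π); in fact C₁^j(π) − C₁^j(π') equals (p(π(l+1)) − p(π(l))) times a nonnegative sum of probabilities, hence is nonnegative. -/
/-!
Reindex assignments by their outcome pattern `g = a ∘ π` in query order, with probabilities
`q = p ∘ π`: querying `a` in the order `π * τ`, `τ = swap l (l+1)`, is querying `g ∘ τ` in the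
identity order. Pairing `g` with `g ∘ τ`, an involution of the block, symmetrizes the cost
difference into `½ ∑ (stop g - stop (g ∘ τ)) (Pr g - Pr (g ∘ τ))`. The factor
`Pr g - Pr (g ∘ τ)` equals `(q (l+1) - q l) (g (l+1) - g l)` times the probability of the other
coordinates, and of `g`, `g ∘ τ` the pattern with its one at `l` rather than `l+1` reaches `αⱼ`
ones no later, so every summand has the sign of `q (l+1) - q l`.
-/

open Finset

/-- Number of true bits of an assignment. -/
def N1 {n : ℕ} (a : Fin n → Bool) : ℕ :=
  (Finset.univ.filter (fun i => a i = true)).card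

/-- Probability of an assignment. -/
noncomputable def pr {n : ℕ} (p : Fin n → ℝ) (a : Fin n → Bool) : ℝ :=
  ∏ i, if a i then p i else 1 - p i

/-- Least `k` such that the first `k` entries of `l` contain at least `m`
indices selected by `sel`. -/
noncomputable def stopCount {n : ℕ} (sel : Fin n → Bool) (m : ℕ) (l : List (Fin n)) : ℕ :=
  sInf {k | m ≤ ((l.take k).filter sel).length}

/-- `C₁^j(σ)`: expected number of queries, over the block `{a | αj ≤ N₁(a) < βj}`,
until `αj` ones have been observed, querying in the order `σ(0), σ(1), …`. -/
noncomputable def C1 {n : ℕ} (p : Fin n → ℝ) (αj βj : ℕ) (σ : Equiv.Perm (Fin n)) : ℝ :=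
  ∑ a ∈ Finset.univ.filter (fun a : Fin n → Bool => αj ≤ N1 a ∧ N1 a < βj),
    (stopCount a αj (List.ofFn (fun t => σ t)) : ℝ) * pr p a

namespace Finset

variable {ι R : Type*} [CommRing R]

theorem two_mul_sum_sub_comp_mul_eq_of_involutive {s : Finset ι} {e : ι → ι}
    (he : Function.Involutive e) (hs : ∀ a ∈ s, e a ∈ s) (f h : ι → R) :
    2 * ∑ a ∈ s, (f a - f (e a)) * h a = ∑ a ∈ s, (f a - f (e a)) * (h a - h (e a)) := by
  have hreindex : ∑ a ∈ s, (f a - f (e a)) * h a = ∑ a ∈ s, (f (e a) - f a) * h (e a) :=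
    sum_nbij' e e hs hs (fun a _ => he a) (fun a _ => he a) (fun a _ => by rw [he a])
  rw [two_mul]
  nth_rewrite 2 [hreindex]
  rw [← sum_add_distrib]
  exact sum_congr rfl fun a _ => by ring

end Finset

variable {n : ℕ}

theorem N1_comp_perm (a : Fin n → Bool) (σ : Equiv.Perm (Fin n)) :
    N1 (fun i => a (σ i)) = N1 a :=
  card_bij' (fun t _ => σ t) (fun t _ => σ.symm t) (by simp) (by simp) (by simp) (by simp)

theorem pr_comp_perm (p : Fin n → ℝ) (a : Fin n → Bool) (σ : Equiv.Perm (Fin n)) :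
    pr (fun i => p (σ i)) (fun i => a (σ i)) = pr p a :=
  Equiv.prod_comp σ fun i => if a i then p i else 1 - p i

theorem stopCount_map (sel : Fin n → Bool) (m : ℕ) (f : Fin n → Fin n) (L : List (Fin n)) :
    stopCount sel m (L.map f) = stopCount (fun i => sel (f i)) m L := by
  simp only [stopCount, ← List.map_take, List.filter_map, List.length_map]
  rfl

theorem stopCount_ofFn (sel : Fin n → Bool) (m : ℕ) (f : Fin n → Fin n) :
    stopCount sel m (List.ofFn f) = stopCount (fun t => sel (f t)) m (List.finRange n) := by
  rw [List.ofFn_eq_map, stopCount_map]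

theorem length_filter_take_finRange (g : Fin n → Bool) (k : ℕ) :
    (((List.finRange n).take k).filter g).length = #{t : Fin n | (t : ℕ) < k ∧ g t} := by
  have hnodup : (((List.finRange n).take k).filter g).Nodup :=
    ((List.nodup_finRange n).sublist (List.take_sublist _ _)).filter _
  rw [← List.toFinset_card_of_nodup hnodup]
  congr 1
  ext t
  simp [List.mem_take_iff_getElem, Fin.ext_iff]

theorem card_filter_lt_comp_swap_le {g : Fin n → Bool} {i j : Fin n} (hij : i < j)
    (hj : g j = false) (k : ℕ) :
    #{t : Fin n | (t : ℕ) < k ∧ g (Equiv.swap i j t)} ≤ #{t : Fin n | (t : ℕ) < k ∧ g t} := by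
  refine card_le_card_of_injOn (Equiv.swap i j) (fun t ht => ?_) (Equiv.swap i j).injective.injOn
  simp only [coe_filter, mem_univ, true_and, Set.mem_ofPred_eq] at ht ⊢
  refine ⟨?_, ht.2⟩
  rcases eq_or_ne t i with rfl | hti
  · simp_all
  rcases eq_or_ne t j with rfl | htj
  · simp only [Equiv.swap_apply_right]; exact (Fin.lt_def.mp hij).trans ht.1
  · rw [Equiv.swap_apply_of_ne_of_ne hti htj]; exact ht.1

theorem stopCount_le_stopCount_comp_swap {g : Fin n → Bool} {i j : Fin n} (hij : i < j)
    (hj : g j = false) {m : ℕ} (hm : m ≤ N1 g) :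
    stopCount g m (List.finRange n)
      ≤ stopCount (fun t => g (Equiv.swap i j t)) m (List.finRange n) := by
  simp only [stopCount, length_filter_take_finRange]
  have hN1 : ∀ h : Fin n → Bool, #{t : Fin n | (t : ℕ) < n ∧ h t} = N1 h := fun h =>
    congrArg card (filter_congr fun t _ => by simp [t.isLt])
  have hmem : n ∈ {k | m ≤ #{t : Fin n | (t : ℕ) < k ∧ g (Equiv.swap i j t)}} := by
    rw [Set.mem_ofPred_eq, hN1 fun t => g (Equiv.swap i j t), N1_comp_perm]
    exact hm
  exact Nat.sInf_le ((Nat.sInf_mem ⟨n, hmem⟩).trans (card_filter_lt_comp_swap_le hij hj _))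

theorem stopCount_sub_mul_toNat_sub_nonneg (g : Fin n → Bool) {i j : Fin n} (hij : i < j)
    {m : ℕ} (hm : m ≤ N1 g) :
    0 ≤ ((stopCount g m (List.finRange n) : ℝ)
        - stopCount (fun t => g (Equiv.swap i j t)) m (List.finRange n))
      * (((g j).toNat : ℝ) - (g i).toNat) := by
  set τ := Equiv.swap i j
  cases hgi : g i <;> cases hgj : g j
  · simp
  · have hle := stopCount_le_stopCount_comp_swap (g := fun t => g (τ t)) hij
      (by simpa [τ] using hgi) (hm.trans_eq (N1_comp_perm g τ).symm)
    simp only [τ, Equiv.swap_apply_self] at hle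
    simp only [Bool.toNat_true, Bool.toNat_false, Nat.cast_one, Nat.cast_zero]
    nlinarith [(Nat.cast_le (α := ℝ)).mpr hle]
  · have hle := stopCount_le_stopCount_comp_swap hij hgj hm
    simp only [Bool.toNat_true, Bool.toNat_false, Nat.cast_one, Nat.cast_zero]
    nlinarith [(Nat.cast_le (α := ℝ)).mpr hle]
  · simp

theorem pr_sub_pr_comp_swap (q : Fin n → ℝ) (g : Fin n → Bool) {i j : Fin n} (hij : i ≠ j) :
    pr q g - pr q (fun t => g (Equiv.swap i j t))
      = (q j - q i) * (((g j).toNat : ℝ) - (g i).toNat)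
        * ∏ t ∈ (univ.erase i).erase j, if g t then q t else 1 - q t := by
  have hj : j ∈ univ.erase i := mem_erase.mpr ⟨hij.symm, mem_univ j⟩
  have hrest : ∏ t ∈ (univ.erase i).erase j, (if g (Equiv.swap i j t) then q t else 1 - q t)
      = ∏ t ∈ (univ.erase i).erase j, if g t then q t else 1 - q t :=
    prod_congr rfl fun t ht => by
      rw [Equiv.swap_apply_of_ne_of_ne (ne_of_mem_erase (mem_of_mem_erase ht))
        (ne_of_mem_erase ht)]
  simp only [pr, ← mul_prod_erase univ _ (mem_univ i), ← mul_prod_erase _ _ hj, hrest,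
    Equiv.swap_apply_left, Equiv.swap_apply_right]
  cases g i <;> cases g j <;> simp <;> ring

theorem C1_mul (p : Fin n → ℝ) (αj βj : ℕ) (π ρ : Equiv.Perm (Fin n)) :
    C1 p αj βj (π * ρ)
      = ∑ g ∈ univ.filter (fun g : Fin n → Bool => αj ≤ N1 g ∧ N1 g < βj),
          (stopCount (fun t => g (ρ t)) αj (List.finRange n) : ℝ) * pr (fun i => p (π i)) g := by
  refine sum_nbij' (fun a i => a (π i)) (fun g i => g (π.symm i)) ?_ ?_ ?_ ?_ ?_
  · simp [N1_comp_perm]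
  · intro g hg
    simpa [N1_comp_perm] using hg
  · simp
  · simp
  · intro a _
    rw [stopCount_ofFn, pr_comp_perm]
    rfl

noncomputable def swapGain (p : Fin n → ℝ) (αj βj : ℕ) (π : Equiv.Perm (Fin n)) (i i' : Fin n) :
    ℝ :=
  1 / 2 * ∑ g ∈ univ.filter (fun g : Fin n → Bool => αj ≤ N1 g ∧ N1 g < βj),
    ((stopCount g αj (List.finRange n) : ℝ)
        - stopCount (fun t => g (Equiv.swap i i' t)) αj (List.finRange n))
      * (((g i').toNat : ℝ) - (g i).toNat)
      * ∏ t ∈ (univ.erase i).erase i', if g t then p (π t) else 1 - p (π t)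

theorem swapGain_nonneg {p : Fin n → ℝ} (hp : ∀ i, 0 ≤ p i ∧ p i ≤ 1) (αj βj : ℕ)
    (π : Equiv.Perm (Fin n)) {i i' : Fin n} (hii' : i < i') :
    0 ≤ swapGain p αj βj π i i' := by
  refine mul_nonneg (by norm_num) (sum_nonneg fun g hg => mul_nonneg ?_ ?_)
  · exact stopCount_sub_mul_toNat_sub_nonneg g hii' (mem_filter.mp hg).2.1
  · exact prod_nonneg fun t _ => by split_ifs <;> linarith [hp (π t)]

theorem C1_sub_C1_mul_swap (p : Fin n → ℝ) (αj βj : ℕ) (π : Equiv.Perm (Fin n)) {i i' : Fin n}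
    (hii' : i ≠ i') :
    C1 p αj βj π - C1 p αj βj (π * Equiv.swap i i')
      = (p (π i') - p (π i)) * swapGain p αj βj π i i' := by
  set τ := Equiv.swap i i'
  set block := univ.filter (fun g : Fin n → Bool => αj ≤ N1 g ∧ N1 g < βj)
  have hinv : Function.Involutive fun (g : Fin n → Bool) t => g (τ t) :=
    fun g => funext fun t => congrArg g (Equiv.swap_apply_self i i' t)
  have hblock : ∀ g ∈ block, (fun t => g (τ t)) ∈ block := fun g hg => by
    simpa [block, N1_comp_perm] using hg
  have hsym := two_mul_sum_sub_comp_mul_eq_of_involutive hinv hblock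
    (fun g => (stopCount g αj (List.finRange n) : ℝ)) (pr fun t => p (π t))
  have hfactor : ∑ g ∈ block, ((stopCount g αj (List.finRange n) : ℝ)
        - stopCount (fun t => g (τ t)) αj (List.finRange n))
        * (pr (fun t => p (π t)) g - pr (fun t => p (π t)) fun t => g (τ t))
      = 2 * ((p (π i') - p (π i)) * swapGain p αj βj π i i') := by
    simp only [swapGain, mul_sum]
    exact sum_congr rfl fun g _ => by rw [pr_sub_pr_comp_swap _ g hii']; ring
  have hC1 : C1 p αj βj π - C1 p αj βj (π * τ)
      = ∑ g ∈ block, ((stopCount g αj (List.finRange n) : ℝ)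
          - stopCount (fun t => g (τ t)) αj (List.finRange n)) * pr (fun t => p (π t)) g := by
    rw [C1_mul, ← mul_one π, C1_mul, mul_one, ← sum_sub_distrib]
    exact sum_congr rfl fun g _ => (sub_mul _ _ _).symm
  linarith

theorem stmt2_general {n : ℕ} (p : Fin n → ℝ)
    (hp : ∀ i, 0 < p i ∧ p i < 1)
    (α : ℕ → ℕ)
    (j : ℕ)
    (π : Equiv.Perm (Fin n)) (l : Fin n) (hl : (l : ℕ) + 1 < n)
    (hpl : p (π l) < p (π ⟨(l : ℕ) + 1, hl⟩))
    (π' : Equiv.Perm (Fin n))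
    (hπ' : π' = π * Equiv.swap l ⟨(l : ℕ) + 1, hl⟩) :
    C1 p (α j) (α (j + 1)) π' ≤ C1 p (α j) (α (j + 1)) π ∧
    ∃ S : ℝ, 0 ≤ S ∧
      C1 p (α j) (α (j + 1)) π - C1 p (α j) (α (j + 1)) π' =
        (p (π ⟨(l : ℕ) + 1, hl⟩) - p (π l)) * S := by
  have hll' : l < ⟨(l : ℕ) + 1, hl⟩ := Fin.lt_def.mpr (Nat.lt_succ_self _)
  have hS := swapGain_nonneg (fun i => ⟨(hp i).1.le, (hp i).2.le⟩) (α j) (α (j + 1)) π hll'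
  have hdiff := hπ' ▸ C1_sub_C1_mul_swap p (α j) (α (j + 1)) π hll'.ne
  exact ⟨sub_nonneg.mp (hdiff ▸ mul_nonneg (sub_nonneg.mpr hpl.le) hS), _, hS, hdiff⟩

theorem stmt2 {n : ℕ} (hn : 1 ≤ n) (p : Fin n → ℝ)
    (hp : ∀ i, 0 < p i ∧ p i < 1)
    (B : ℕ) (hB : 2 ≤ B) (α : ℕ → ℕ)
    (hα1 : α 1 = 0) (hαtop : α (B + 1) = n + 1)
    (hmono : ∀ j, 1 ≤ j → j ≤ B → α j < α (j + 1))
    (j : ℕ) (hj1 : 1 ≤ j) (hjB : j ≤ B)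
    (π : Equiv.Perm (Fin n)) (l : Fin n) (hl : (l : ℕ) + 1 < n)
    (hpl : p (π l) < p (π ⟨(l : ℕ) + 1, hl⟩))
    (π' : Equiv.Perm (Fin n))
    (hπ' : π' = π * Equiv.swap l ⟨(l : ℕ) + 1, hl⟩) :
    C1 p (α j) (α (j + 1)) π' ≤ C1 p (α j) (α (j + 1)) π ∧
    ∃ S : ℝ, 0 ≤ S ∧
      C1 p (α j) (α (j + 1)) π - C1 p (α j) (α (j + 1)) π' =
        (p (π ⟨(l : ℕ) + 1, hl⟩) - p (π l)) * S :=
  stmt2_general p hp α j π l hl hpl π' hπ'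
end

section
/- Assume unit costs. For every j ∈ {1,…,B} and every decision tree T evaluating the score classification function f: C₁^j(σ¹) ≤ Σ_{a∈M^j} C(T,a)·Pr(a) and C₀^j(σ⁰) ≤ Σ_{a∈M^j} C(T,a)·Pr(a). -/
open Finset

/-- `C₀^j(σ)`: expected number of queries, over the block `{a | αj ≤ N₁(a) < βj}`,
until `n − βj + 1` zeros have been observed, querying in the order `σ(0), σ(1), …`. -/
noncomputable def C0 {n : ℕ} (p : Fin n → ℝ) (αj βj : ℕ) (σ : Equiv.Perm (Fin n)) : ℝ :=
  ∑ a ∈ Finset.univ.filter (fun a : Fin n → Bool => αj ≤ N1 a ∧ N1 a < βj),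
    (stopCount (fun i => !a i) (n + 1 - βj) (List.ofFn (fun t => σ t)) : ℝ) * pr p a
/-- Binary decision trees over `n` bits, with natural-number leaf labels. -/
inductive DTree (n : ℕ) : Type where
  | leaf : ℕ → DTree n
  | node : Fin n → DTree n → DTree n → DTree n

namespace DTree

/-- Output of the tree on assignment `a`. -/
def eval {n : ℕ} : DTree n → (Fin n → Bool) → ℕ
  | .leaf v, _ => v
  | .node i t0 t1, a => if a i then eval t1 a else eval t0 a

/-- Total cost of the queries made on assignment `a`. -/
noncomputable def cost {n : ℕ} (c : Fin n → ℝ) : DTree n → (Fin n → Bool) → ℝ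
  | .leaf _, _ => 0
  | .node i t0 t1, a => c i + (if a i then cost c t1 a else cost c t0 a)

/-- The list of indices queried on assignment `a`, in order. -/
def path {n : ℕ} : DTree n → (Fin n → Bool) → List (Fin n)
  | .leaf _, _ => []
  | .node i t0 t1, a => i :: (if a i then path t1 a else path t0 a)

/-- No index occurs twice on any root-to-leaf path (given already-used indices). -/
def Proper {n : ℕ} : DTree n → Finset (Fin n) → Prop
  | .leaf _, _ => True
  | .node i t0 t1, used =>
      i ∉ used ∧ Proper t0 (insert i used) ∧ Proper t1 (insert i used)

/-- Every root-to-leaf path queries all `n` indices (and no repeats). -/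
def Full {n : ℕ} : DTree n → Finset (Fin n) → Prop
  | .leaf _, used => used = Finset.univ
  | .node i t0 t1, used =>
      i ∉ used ∧ Full t0 (insert i used) ∧ Full t1 (insert i used)

end DTree


section S1
variable {n : ℕ}

/-- number of selected entries of a list -/
def cnt (sel : Fin n → Bool) (l : List (Fin n)) : ℕ := (l.filter sel).length

lemma cnt_cons (sel : Fin n → Bool) (x : Fin n) (l : List (Fin n)) :
    cnt sel (x :: l) = (if sel x then 1 else 0) + cnt sel l := by
  simp [cnt, List.filter_cons]; split <;> simp [Nat.add_comm]

lemma stop_def (sel : Fin n → Bool) (m : ℕ) (l : List (Fin n)) :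
    stopCount sel m l = sInf {k | m ≤ cnt sel (l.take k)} := rfl

lemma stop_zero (sel : Fin n → Bool) (l : List (Fin n)) : stopCount sel 0 l = 0 :=
  Nat.sInf_eq_zero.2 (Or.inl (by simp [Set.mem_setOf_eq]))

lemma stop_le_length {sel : Fin n → Bool} {m : ℕ} {l : List (Fin n)} (h : m ≤ cnt sel l) :
    stopCount sel m l ≤ l.length :=
  Nat.sInf_le (by simpa [Set.mem_setOf_eq, cnt] using h)

lemma stop_congr {sel sel' : Fin n → Bool} {l : List (Fin n)} (m : ℕ)
    (h : ∀ i ∈ l, sel i = sel' i) : stopCount sel m l = stopCount sel' m l := by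
  unfold stopCount
  congr 1
  ext k
  have : (l.take k).filter sel = (l.take k).filter sel' :=
    List.filter_congr (fun i hi => h i (List.mem_of_mem_take hi))
  simp [Set.mem_setOf_eq, this]

lemma stop_cons {sel : Fin n → Bool} {m : ℕ} {x : Fin n} {l : List (Fin n)}
    (h1 : 1 ≤ m) (h2 : m ≤ cnt sel (x :: l)) :
    stopCount sel m (x :: l) = stopCount sel (m - (if sel x then 1 else 0)) l + 1 := by
  set e : ℕ := if sel x then 1 else 0 with he
  have he1 : e ≤ 1 := by rw [he]; split <;> omega
  have hcnt : cnt sel (x :: l) = e + cnt sel l := cnt_cons sel x l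
  set A : Set ℕ := {k | m ≤ cnt sel ((x :: l).take k)} with hA
  set B : Set ℕ := {k | m - e ≤ cnt sel (l.take k)} with hB
  have hAB : ∀ k, (k + 1 ∈ A ↔ k ∈ B) := by
    intro k
    simp only [hA, hB, Set.mem_setOf_eq, List.take_succ_cons, cnt_cons, ← he]
    omega
  have h0A : (0 : ℕ) ∉ A := by simp [hA, Set.mem_setOf_eq, cnt]; omega
  have hBne : l.length ∈ B := by
    simp only [hB, Set.mem_setOf_eq, List.take_length]
    omega
  have hsB : sInf B ∈ B := Nat.sInf_mem ⟨_, hBne⟩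
  have hsBA : sInf B + 1 ∈ A := (hAB _).2 hsB
  have h1' : sInf A ≤ sInf B + 1 := Nat.sInf_le hsBA
  have hsA : sInf A ∈ A := Nat.sInf_mem ⟨_, hsBA⟩
  have h2' : sInf B + 1 ≤ sInf A := by
    rcases Nat.exists_eq_succ_of_ne_zero (fun h => h0A (h ▸ hsA)) with ⟨k, hk⟩
    have : k ∈ B := (hAB k).1 (by rw [← Nat.succ_eq_add_one, ← hk]; exact hsA)
    have := Nat.sInf_le this
    omega
  show sInf A = sInf B + 1
  omega

lemma stop_mono {sel sel' : Fin n → Bool} {m : ℕ} {l : List (Fin n)}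
    (h : ∀ k, cnt sel (l.take k) ≤ cnt sel' (l.take k)) (hne : m ≤ cnt sel l) :
    stopCount sel' m l ≤ stopCount sel m l := by
  have hA : stopCount sel m l ∈ {k | m ≤ cnt sel (l.take k)} := by
    apply Nat.sInf_mem
    exact ⟨l.length, by simpa [Set.mem_setOf_eq, List.take_length] using hne⟩
  exact Nat.sInf_le (le_trans hA (h _))

end S1

section S2
variable {n : ℕ}

lemma path_avoids {t : DTree n} {used : Finset (Fin n)} (h : t.Proper used)
    (a : Fin n → Bool) : ∀ x ∈ t.path a, x ∉ used := by
  induction t generalizing used with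
  | leaf v => simp [DTree.path]
  | node i t0 t1 ih0 ih1 =>
    obtain ⟨hi, h0, h1⟩ := h
    intro x hx
    simp only [DTree.path, List.mem_cons] at hx
    rcases hx with rfl | hx
    · exact hi
    · by_cases hai : a i
      · simp [hai] at hx
        exact fun hxu => ih1 h1 x hx (Finset.mem_insert_of_mem hxu)
      · simp [hai] at hx
        exact fun hxu => ih0 h0 x hx (Finset.mem_insert_of_mem hxu)

lemma path_nodup {t : DTree n} {used : Finset (Fin n)} (h : t.Proper used)
    (a : Fin n → Bool) : (t.path a).Nodup := by
  induction t generalizing used with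
  | leaf v => simp [DTree.path]
  | node i t0 t1 ih0 ih1 =>
    obtain ⟨hi, h0, h1⟩ := h
    simp only [DTree.path]
    by_cases hai : a i
    · rw [if_pos hai]
      refine List.nodup_cons.2 ⟨?_, ih1 h1⟩
      exact fun hmem => (path_avoids h1 a i hmem) (Finset.mem_insert_self i used)
    · rw [if_neg hai]
      refine List.nodup_cons.2 ⟨?_, ih0 h0⟩
      exact fun hmem => (path_avoids h0 a i hmem) (Finset.mem_insert_self i used)

lemma path_eval_congr {t : DTree n} {a a' : Fin n → Bool}
    (h : ∀ i ∈ t.path a, a i = a' i) : t.path a' = t.path a ∧ t.eval a' = t.eval a := by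
  induction t with
  | leaf v => simp [DTree.path, DTree.eval]
  | node i t0 t1 ih0 ih1 =>
    have hi : a i = a' i := h i (by simp [DTree.path])
    by_cases hai : a i
    · have hai' : a' i = true := by rw [← hi]; exact hai
      have hrec := ih1 (fun x hx => h x (by simp [DTree.path, hai, hx]))
      simp [DTree.path, DTree.eval, hai, hai', hrec.1, hrec.2]
    · have hai' : a' i = false := by rw [← hi]; simpa using hai
      have hrec := ih0 (fun x hx => h x (by simp [DTree.path, hai, hx]))
      simp [DTree.path, DTree.eval, hai, hai', hrec.1, hrec.2]

lemma path_congr_off {t : DTree n} {used : Finset (Fin n)} (h : t.Proper used)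
    {a a' : Fin n → Bool} (hagree : ∀ i ∉ used, a i = a' i) :
    t.path a' = t.path a :=
  (path_eval_congr (fun i hi => hagree i (path_avoids h a i hi))).1

lemma cost_eq_length {c : Fin n → ℝ} (hc : ∀ i, c i = 1) (t : DTree n) (a : Fin n → Bool) :
    t.cost c a = ((t.path a).length : ℝ) := by
  induction t with
  | leaf v => simp [DTree.cost, DTree.path]
  | node i t0 t1 ih0 ih1 =>
    by_cases hai : a i <;> simp [DTree.cost, DTree.path, hai, hc i, ih0, ih1, add_comm]

-- probability lemmas
lemma pr_nonneg {p : Fin n → ℝ} (hp : ∀ i, 0 < p i ∧ p i < 1) (a : Fin n → Bool) :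
    0 ≤ pr p a := by
  apply Finset.prod_nonneg
  intro i _
  rcases hp i with ⟨h1, h2⟩
  split <;> linarith

lemma sum_split (p : Fin n → ℝ) (u : Fin n) (Gt Gf : (Fin n → Bool) → ℝ)
    (hGt : ∀ (a : Fin n → Bool) (v : Bool), Gt (Function.update a u v) = Gt a)
    (hGf : ∀ (a : Fin n → Bool) (v : Bool), Gf (Function.update a u v) = Gf a) :
    ∑ a : Fin n → Bool, pr p a * (if a u then Gt a else Gf a)
      = p u * ∑ a : Fin n → Bool, pr p a * Gt a
        + (1 - p u) * ∑ a : Fin n → Bool, pr p a * Gf a := by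
  classical
  set R : (Fin n → Bool) → ℝ := fun a => ∏ i ∈ Finset.univ.erase u, (if a i then p i else 1 - p i) with hR
  have hpr : ∀ a : Fin n → Bool, pr p a = (if a u then p u else 1 - p u) * R a := by
    intro a
    exact (Finset.mul_prod_erase Finset.univ _ (Finset.mem_univ u)).symm
  have hRinv : ∀ (a : Fin n → Bool) (v : Bool), R (Function.update a u v) = R a := by
    intro a v
    apply Finset.prod_congr rfl
    intro i hi
    rw [Function.update_of_ne (Finset.ne_of_mem_erase hi)]
  have bij : ∀ (K : (Fin n → Bool) → ℝ),
      (∀ (a : Fin n → Bool) (v : Bool), K (Function.update a u v) = K a) →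
      ∑ a ∈ Finset.univ.filter (fun a : Fin n → Bool => a u = true), R a * K a
        = ∑ a ∈ Finset.univ.filter (fun a : Fin n → Bool => ¬ (a u = true)), R a * K a := by
    intro K hK
    apply Finset.sum_nbij' (fun a => Function.update a u false) (fun a => Function.update a u true)
    · intro a ha; simp
    · intro a ha; simp
    · intro a ha
      simp only [Finset.mem_filter] at ha
      rw [Function.update_idem, ← ha.2, Function.update_eq_self]
    · intro a ha
      simp only [Finset.mem_filter] at ha
      rw [Function.update_idem]
      have : a u = false := by simpa using ha.2
      rw [← this, Function.update_eq_self]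
    · intro a ha
      rw [hRinv, hK]
  have expand : ∀ (K : (Fin n → Bool) → ℝ),
      (∀ (a : Fin n → Bool) (v : Bool), K (Function.update a u v) = K a) →
      ∑ a : Fin n → Bool, pr p a * K a
        = ∑ a ∈ Finset.univ.filter (fun a : Fin n → Bool => a u = true), R a * K a := by
    intro K hK
    rw [← Finset.sum_filter_add_sum_filter_not Finset.univ (fun a : Fin n → Bool => a u = true)]
    have e1 : ∑ a ∈ Finset.univ.filter (fun a : Fin n → Bool => a u = true), pr p a * K a
        = p u * ∑ a ∈ Finset.univ.filter (fun a : Fin n → Bool => a u = true), R a * K a := by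
      rw [Finset.mul_sum]
      apply Finset.sum_congr rfl
      intro a ha
      simp only [Finset.mem_filter] at ha
      rw [hpr a, ha.2, if_pos rfl, mul_assoc]
    have e2 : ∑ a ∈ Finset.univ.filter (fun a : Fin n → Bool => ¬(a u = true)), pr p a * K a
        = (1 - p u) * ∑ a ∈ Finset.univ.filter (fun a : Fin n → Bool => ¬(a u = true)), R a * K a := by
      rw [Finset.mul_sum]
      apply Finset.sum_congr rfl
      intro a ha
      simp only [Finset.mem_filter] at ha
      rw [hpr a, if_neg ha.2, mul_assoc]
    rw [e1, e2, ← bij K hK]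
    ring
  rw [← Finset.sum_filter_add_sum_filter_not Finset.univ (fun a : Fin n → Bool => a u = true)]
  have e1 : ∑ a ∈ Finset.univ.filter (fun a : Fin n → Bool => a u = true),
        pr p a * (if a u then Gt a else Gf a)
      = p u * ∑ a ∈ Finset.univ.filter (fun a : Fin n → Bool => a u = true), R a * Gt a := by
    rw [Finset.mul_sum]
    apply Finset.sum_congr rfl
    intro a ha
    simp only [Finset.mem_filter] at ha
    rw [hpr a, ha.2, if_pos rfl, if_pos rfl, mul_assoc]
  have e2 : ∑ a ∈ Finset.univ.filter (fun a : Fin n → Bool => ¬(a u = true)),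
        pr p a * (if a u then Gt a else Gf a)
      = (1 - p u) * ∑ a ∈ Finset.univ.filter (fun a : Fin n → Bool => ¬(a u = true)), R a * Gf a := by
    rw [Finset.mul_sum]
    apply Finset.sum_congr rfl
    intro a ha
    simp only [Finset.mem_filter] at ha
    have : a u = false := by simpa using ha.2
    rw [hpr a, this, if_neg (by simp), if_neg (by simp), mul_assoc]
  rw [e1, e2, expand Gt hGt, expand Gf hGf, bij Gf hGf]

end S2

section S3
variable {n : ℕ}

/-- number of ones within `S` -/
def N1S (S : Finset (Fin n)) (a : Fin n → Bool) : ℕ := (S.filter (fun i => a i = true)).card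

/-- block weight -/
noncomputable def w (S : Finset (Fin n)) (m β : ℕ) (a : Fin n → Bool) : ℝ :=
  if m ≤ N1S S a ∧ N1S S a < β then 1 else 0

lemma w_nonneg (S : Finset (Fin n)) (m β : ℕ) (a : Fin n → Bool) : 0 ≤ w S m β a := by
  unfold w; split <;> norm_num

lemma N1S_congr {S : Finset (Fin n)} {a a' : Fin n → Bool}
    (h : ∀ i ∈ S, a i = a' i) : N1S S a = N1S S a' := by
  unfold N1S
  congr 1
  apply Finset.filter_congr
  intro i hi
  rw [h i hi]

lemma N1S_update {S : Finset (Fin n)} {u : Fin n} (hu : u ∉ S) (a : Fin n → Bool) (v : Bool) :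
    N1S S (Function.update a u v) = N1S S a :=
  (N1S_congr (fun i hi => (Function.update_of_ne (fun he : i = u => hu (he ▸ hi)) v a).symm)).symm

lemma w_update {S : Finset (Fin n)} {u : Fin n} (hu : u ∉ S) (m β : ℕ) (a : Fin n → Bool)
    (v : Bool) : w S m β (Function.update a u v) = w S m β a := by
  unfold w; rw [N1S_update hu]

lemma N1S_erase {S : Finset (Fin n)} {u : Fin n} (hu : u ∈ S) (a : Fin n → Bool) :
    N1S S a = (if a u then 1 else 0) + N1S (S.erase u) a := by
  unfold N1S
  rw [Finset.filter_erase]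
  by_cases hmem : u ∈ S.filter (fun i => a i = true)
  · have hau : a u = true := (Finset.mem_filter.1 hmem).2
    have h1 : 1 ≤ (S.filter (fun i => a i = true)).card := Finset.card_pos.2 ⟨u, hmem⟩
    rw [Finset.card_erase_of_mem hmem, if_pos hau]
    omega
  · have hau : a u = false := by
      by_contra h
      exact hmem (Finset.mem_filter.2 ⟨hu, by simpa using h⟩)
    rw [Finset.erase_eq_of_notMem hmem, if_neg (by simp [hau])]
    omega

/-- `cnt` over a nodup list equals `N1S` over its finset -/
lemma cnt_eq_N1S {l : List (Fin n)} (hl : l.Nodup) (a : Fin n → Bool) :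
    cnt a l = N1S l.toFinset a := by
  unfold cnt N1S
  rw [← List.toFinset_card_of_nodup (hl.filter a)]
  congr 1
  ext i
  simp [List.mem_filter, and_comm]

lemma w_shift_true {S : Finset (Fin n)} {u : Fin n} (hu : u ∈ S) {m β : ℕ}
    (hm : 1 ≤ m) (hβ : 1 ≤ β) {a : Fin n → Bool} (hau : a u = true) :
    w S m β a = w (S.erase u) (m - 1) (β - 1) a := by
  unfold w
  rw [N1S_erase hu, hau, if_pos rfl]
  apply if_congr _ rfl rfl
  omega

lemma w_shift_false {S : Finset (Fin n)} {u : Fin n} (hu : u ∈ S) {m β : ℕ}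
    {a : Fin n → Bool} (hau : a u = false) :
    w S m β a = w (S.erase u) m β a := by
  unfold w
  rw [N1S_erase hu, hau]
  simp

lemma split_gen (p : Fin n → ℝ) {u : Fin n} {S : Finset (Fin n)} (hu : u ∈ S) {m β : ℕ}
    (hm : 1 ≤ m) (hβ : 1 ≤ β)
    (τ τt τf : (Fin n → Bool) → ℕ)
    (hτt : ∀ (a : Fin n → Bool) (v : Bool), τt (Function.update a u v) = τt a)
    (hτf : ∀ (a : Fin n → Bool) (v : Bool), τf (Function.update a u v) = τf a)
    (ht : ∀ a, a u = true → w S m β a ≠ 0 → τ a = τt a + 1)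
    (hf : ∀ a, a u = false → w S m β a ≠ 0 → τ a = τf a + 1) :
    ∑ a : Fin n → Bool, pr p a * (w S m β a * τ a)
      = p u * ∑ a : Fin n → Bool, pr p a * (w (S.erase u) (m-1) (β-1) a * ((τt a : ℝ) + 1))
        + (1 - p u) * ∑ a : Fin n → Bool, pr p a * (w (S.erase u) m β a * ((τf a : ℝ) + 1)) := by
  have hus : u ∉ S.erase u := Finset.notMem_erase u S
  have key : ∀ a : Fin n → Bool, w S m β a * (τ a : ℝ)
      = if a u then w (S.erase u) (m-1) (β-1) a * ((τt a : ℝ) + 1)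
        else w (S.erase u) m β a * ((τf a : ℝ) + 1) := by
    intro a
    by_cases hau : a u
    · rw [if_pos hau, ← w_shift_true hu hm hβ hau]
      by_cases hw : w S m β a = 0
      · rw [hw]; ring
      · rw [ht a hau hw]; push_cast; ring
    · have hau' : a u = false := by simpa using hau
      rw [if_neg hau, ← w_shift_false hu hau']
      by_cases hw : w S m β a = 0
      · rw [hw]; ring
      · rw [hf a hau' hw]; push_cast; ring
  calc ∑ a : Fin n → Bool, pr p a * (w S m β a * (τ a : ℝ))
      = ∑ a : Fin n → Bool, pr p a * (if a u then w (S.erase u) (m-1) (β-1) a * ((τt a : ℝ) + 1)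
          else w (S.erase u) m β a * ((τf a : ℝ) + 1)) := by
        apply Finset.sum_congr rfl; intro a _; rw [key a]
    _ = _ := by
        apply sum_split
        · intro a v; rw [w_update hus, hτt]
        · intro a v; rw [w_update hus, hτf]

end S3

section S4
variable {n : ℕ}

lemma cnt_congr {sel sel' : Fin n → Bool} {l : List (Fin n)}
    (h : ∀ i ∈ l, sel i = sel' i) : cnt sel l = cnt sel' l := by
  unfold cnt
  rw [List.filter_congr h]

lemma cnt_take_pair {a b : Fin n → Bool} {x y x' y' : Fin n} {q : List (Fin n)}
    (hq : ∀ i ∈ q, a i = b i)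
    (h1 : (if a x then 1 else 0) ≤ (if b x' then 1 else 0))
    (h2 : ((if a x then 1 else 0) + if a y then 1 else 0)
        = ((if b x' then 1 else 0) + if b y' then 1 else 0)) :
    ∀ k, cnt a ((x :: y :: q).take k) ≤ cnt b ((x' :: y' :: q).take k) := by
  intro k
  match k with
  | 0 => simp [cnt]
  | 1 =>
    show cnt a [x] ≤ cnt b [x']
    have e1 : cnt a [x] = (if a x then 1 else 0) := by rw [cnt_cons]; simp [cnt]
    have e2 : cnt b [x'] = (if b x' then 1 else 0) := by rw [cnt_cons]; simp [cnt]
    rw [e1, e2]; exact h1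
  | (k+2) =>
    simp only [List.take_succ_cons, cnt_cons]
    have : cnt a (q.take k) = cnt b (q.take k) :=
      cnt_congr (fun i hi => hq i (List.mem_of_mem_take hi))
    omega

lemma stop_eq_of_cnt_take_eq {a b : Fin n → Bool} {l l' : List (Fin n)} (m : ℕ)
    (h : ∀ k, cnt a (l.take k) = cnt b (l'.take k)) :
    stopCount a m l = stopCount b m l' := by
  rw [stop_def, stop_def]
  congr 1
  ext k
  simp [Set.mem_setOf_eq, h k]

/-- the swap involution on assignments -/
def swapA (u v : Fin n) : (Fin n → Bool) ≃ (Fin n → Bool) where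
  toFun a := a ∘ (Equiv.swap u v)
  invFun a := a ∘ (Equiv.swap u v)
  left_inv a := by funext i; simp [Equiv.swap_apply_self]
  right_inv a := by funext i; simp [Equiv.swap_apply_self]

lemma swapA_apply_u (u v : Fin n) (a : Fin n → Bool) : swapA u v a u = a v := by
  simp [swapA, Equiv.swap_apply_left]

lemma swapA_apply_v (u v : Fin n) (a : Fin n → Bool) : swapA u v a v = a u := by
  simp [swapA, Equiv.swap_apply_right]

lemma swapA_apply_other {u v i : Fin n} (hiu : i ≠ u) (hiv : i ≠ v) (a : Fin n → Bool) :
    swapA u v a i = a i := by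
  simp [swapA, Equiv.swap_apply_of_ne_of_ne hiu hiv]

lemma swapA_swapA (u v : Fin n) (a : Fin n → Bool) : swapA u v (swapA u v a) = a :=
  (swapA u v).left_inv a

lemma N1S_swapA {S : Finset (Fin n)} {u v : Fin n} (huS : u ∈ S) (hvS : v ∈ S)
    (a : Fin n → Bool) : N1S S (swapA u v a) = N1S S a := by
  unfold N1S
  apply Finset.card_bij' (fun x _ => Equiv.swap u v x) (fun x _ => Equiv.swap u v x)
  · intro x hx
    simp only [Finset.mem_filter] at hx ⊢
    refine ⟨?_, hx.2⟩
    rcases hx with ⟨hxS, _⟩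
    by_cases hxu : x = u
    · subst hxu; simpa [Equiv.swap_apply_left] using hvS
    by_cases hxv : x = v
    · subst hxv; simpa [Equiv.swap_apply_right] using huS
    · simpa [Equiv.swap_apply_of_ne_of_ne hxu hxv] using hxS
  · intro x hx
    simp only [Finset.mem_filter] at hx ⊢
    rcases hx with ⟨hxS, hxa⟩
    constructor
    · by_cases hxu : x = u
      · subst hxu; simpa [Equiv.swap_apply_left] using hvS
      by_cases hxv : x = v
      · subst hxv; simpa [Equiv.swap_apply_right] using huS
      · simpa [Equiv.swap_apply_of_ne_of_ne hxu hxv] using hxS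
    · show swapA u v a _ = true
      simpa [swapA, Equiv.swap_apply_self] using hxa
  · intro x _; simp [Equiv.swap_apply_self]
  · intro x _; simp [Equiv.swap_apply_self]

lemma w_swapA {S : Finset (Fin n)} {u v : Fin n} (huS : u ∈ S) (hvS : v ∈ S)
    (m β : ℕ) (a : Fin n → Bool) : w S m β (swapA u v a) = w S m β a := by
  unfold w
  rw [N1S_swapA huS hvS]

lemma pr_factor2 (p : Fin n → ℝ) {u v : Fin n} (huv : u ≠ v) (a : Fin n → Bool) :
    pr p a = (if a u then p u else 1 - p u) * ((if a v then p v else 1 - p v)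
      * ∏ i ∈ (Finset.univ.erase u).erase v, (if a i then p i else 1 - p i)) := by
  unfold pr
  rw [← Finset.mul_prod_erase Finset.univ _ (Finset.mem_univ u),
      ← Finset.mul_prod_erase (Finset.univ.erase u) _
        (Finset.mem_erase.2 ⟨(Ne.symm huv), Finset.mem_univ v⟩)]

lemma pr_swapA (p : Fin n → ℝ) {u v : Fin n} (huv : u ≠ v) (a : Fin n → Bool) :
    pr p (swapA u v a) = (if a v then p u else 1 - p u) * ((if a u then p v else 1 - p v)
      * ∏ i ∈ (Finset.univ.erase u).erase v, (if a i then p i else 1 - p i)) := by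
  rw [pr_factor2 p huv (swapA u v a), swapA_apply_u, swapA_apply_v]
  congr 1
  congr 1
  apply Finset.prod_congr rfl
  intro i hi
  have hiv : i ≠ v := Finset.ne_of_mem_erase hi
  have hiu : i ≠ u := Finset.ne_of_mem_erase (Finset.mem_of_mem_erase hi)
  rw [swapA_apply_other hiu hiv]

lemma headswap (p : Fin n → ℝ) (hp : ∀ i, 0 < p i ∧ p i < 1) {u v : Fin n} (huv : u ≠ v)
    (hpuv : p v ≤ p u) {q : List (Fin n)} (hu : u ∉ q) (hv : v ∉ q)
    (m β : ℕ) (S : Finset (Fin n)) (huS : u ∈ S) (hvS : v ∈ S)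
    (hcnt : ∀ a : Fin n → Bool, w S m β a ≠ 0 → m ≤ cnt a (v :: u :: q)) :
    ∑ a : Fin n → Bool, pr p a * (w S m β a * (stopCount a m (u :: v :: q) : ℝ))
      ≤ ∑ a : Fin n → Bool, pr p a * (w S m β a * (stopCount a m (v :: u :: q) : ℝ)) := by
  classical
  have hqprop : ∀ (a : Fin n → Bool), ∀ i ∈ q, a i = swapA u v a i := by
    intro a i hi
    exact (swapA_apply_other (fun h : i = u => hu (h ▸ hi)) (fun h : i = v => hv (h ▸ hi)) a).symm
  -- stopCount identity
  have hid : ∀ a : Fin n → Bool,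
      stopCount a m (u :: v :: q) = stopCount (swapA u v a) m (v :: u :: q) := by
    intro a
    apply stop_eq_of_cnt_take_eq
    intro k
    have h1 : (if a u then 1 else 0) = (if swapA u v a v then 1 else 0) := by
      rw [swapA_apply_v]
    have h2 : (if a v then 1 else 0) = (if swapA u v a u then 1 else 0) := by
      rw [swapA_apply_u]
    apply Nat.le_antisymm
    · exact cnt_take_pair (hqprop a) (le_of_eq h1) (by omega) k
    · exact cnt_take_pair (fun i hi => (hqprop a i hi).symm) (le_of_eq h1.symm) (by omega) k
  -- cnt of swapped equals cnt
  have hcnt_swap : ∀ a : Fin n → Bool, cnt (swapA u v a) (v :: u :: q) = cnt a (v :: u :: q) := by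
    intro a
    simp only [cnt_cons, swapA_apply_u, swapA_apply_v]
    have : cnt (swapA u v a) q = cnt a q := cnt_congr (fun i hi => (hqprop a i hi).symm)
    omega
  set F : (Fin n → Bool) → ℝ := fun a =>
    pr p a * (w S m β a * ((stopCount a m (v :: u :: q) : ℝ)
      - (stopCount (swapA u v a) m (v :: u :: q) : ℝ))) with hF
  have key : ∀ a : Fin n → Bool, 0 ≤ F a + F (swapA u v a) := by
    intro a
    by_cases hw : w S m β a = 0
    · have hw' : w S m β (swapA u v a) = 0 := by rw [w_swapA huS hvS, hw]
      simp [hF, hw, hw']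
    · have hwa : w S m β a = 1 := by
        unfold w at hw ⊢; split at hw <;> simp_all
      have hw' : w S m β (swapA u v a) = 1 := by rw [w_swapA huS hvS, hwa]
      have hm : m ≤ cnt a (v :: u :: q) := hcnt a hw
      have hRnn : (0:ℝ) ≤ ∏ i ∈ (Finset.univ.erase u).erase v, (if a i then p i else 1 - p i) := by
        apply Finset.prod_nonneg
        intro i _
        rcases hp i with ⟨ha, hb⟩
        split <;> linarith
      set R : ℝ := ∏ i ∈ (Finset.univ.erase u).erase v, (if a i then p i else 1 - p i) with hRdef
      have hFA : F a + F (swapA u v a)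
          = (pr p a - pr p (swapA u v a)) * (w S m β a *
            ((stopCount a m (v :: u :: q) : ℝ) - (stopCount (swapA u v a) m (v :: u :: q) : ℝ))) := by
        rw [hF]
        simp only [swapA_swapA, w_swapA huS hvS]
        ring
      rw [hFA, hwa]
      by_cases hau : a u
      · by_cases hav : a v
        · -- both true: swapA a = a
          have : swapA u v a = a := by
            funext i
            by_cases hiu : i = u
            · subst hiu; rw [swapA_apply_u]; rw [hau, hav]
            by_cases hiv : i = v
            · subst hiv; rw [swapA_apply_v]; rw [hau, hav]
            · exact swapA_apply_other hiu hiv a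
          rw [this]
          ring_nf
          exact le_refl _
        · -- a u = true, a v = false
          have hav' : a v = false := by simpa using hav
          have hpr : 0 ≤ pr p a - pr p (swapA u v a) := by
            rw [pr_factor2 p huv a, pr_swapA p huv a, hau, hav', ← hRdef]
            simp only [if_true, if_false, Bool.false_eq_true]
            nlinarith [hp u, hp v]
          have hτ : (stopCount (swapA u v a) m (v :: u :: q) : ℝ)
              ≤ (stopCount a m (v :: u :: q) : ℝ) := by
            have : stopCount (swapA u v a) m (v :: u :: q) ≤ stopCount a m (v :: u :: q) := by
              apply stop_mono _ hm
              intro k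
              apply cnt_take_pair (hqprop a)
              · rw [swapA_apply_v, hau, hav']; simp
              · rw [swapA_apply_u, swapA_apply_v]; omega
            exact_mod_cast this
          nlinarith
      · by_cases hav : a v
        · -- a u = false, a v = true
          have hau' : a u = false := by simpa using hau
          have hpr : pr p a - pr p (swapA u v a) ≤ 0 := by
            rw [pr_factor2 p huv a, pr_swapA p huv a, hau', hav, ← hRdef]
            simp only [if_true, if_false, Bool.false_eq_true]
            nlinarith [hp u, hp v]
          have hτ : (stopCount a m (v :: u :: q) : ℝ)
              ≤ (stopCount (swapA u v a) m (v :: u :: q) : ℝ) := by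
            have : stopCount a m (v :: u :: q) ≤ stopCount (swapA u v a) m (v :: u :: q) := by
              apply stop_mono _ (by rw [hcnt_swap]; exact hm)
              intro k
              apply cnt_take_pair (fun i hi => (hqprop a i hi).symm)
              · rw [swapA_apply_v, hau', hav]; simp
              · rw [swapA_apply_u, swapA_apply_v]; omega
            exact_mod_cast this
          nlinarith
        · -- both false: swapA a = a
          have hav' : a v = false := by simpa using hav
          have hau' : a u = false := by simpa using hau
          have : swapA u v a = a := by
            funext i
            by_cases hiu : i = u
            · subst hiu; rw [swapA_apply_u]; rw [hau', hav']
            by_cases hiv : i = v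
            · subst hiv; rw [swapA_apply_v]; rw [hau', hav']
            · exact swapA_apply_other hiu hiv a
          rw [this]
          ring_nf
          exact le_refl _
  -- conclude
  have hsum : ∑ a : Fin n → Bool, F (swapA u v a) = ∑ a : Fin n → Bool, F a :=
    Equiv.sum_comp (swapA u v) F
  have h2 : 0 ≤ (2:ℝ) * ∑ a : Fin n → Bool, F a := by
    have := Finset.sum_nonneg (fun a (_ : a ∈ Finset.univ) => key a)
    rw [Finset.sum_add_distrib, hsum] at this
    linarith
  have hFnn : 0 ≤ ∑ a : Fin n → Bool, F a := by linarith
  have hexp : ∑ a : Fin n → Bool, F a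
      = ∑ a : Fin n → Bool, pr p a * (w S m β a * (stopCount a m (v :: u :: q) : ℝ))
        - ∑ a : Fin n → Bool, pr p a * (w S m β a * (stopCount a m (u :: v :: q) : ℝ)) := by
    rw [← Finset.sum_sub_distrib]
    apply Finset.sum_congr rfl
    intro a _
    rw [hF, hid a]
    ring
  linarith [hexp ▸ hFnn]

end S4

section S5
variable {n : ℕ}

noncomputable def Phi (p : Fin n → ℝ) (S : Finset (Fin n)) (m β : ℕ)
    (τ : (Fin n → Bool) → ℕ) : ℝ :=
  ∑ a : Fin n → Bool, pr p a * (w S m β a * (τ a : ℝ))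

noncomputable def WS (p : Fin n → ℝ) (S : Finset (Fin n)) (m β : ℕ) : ℝ :=
  ∑ a : Fin n → Bool, pr p a * w S m β a

lemma Phi_nonneg {p : Fin n → ℝ} (hp : ∀ i, 0 < p i ∧ p i < 1) (S : Finset (Fin n)) (m β : ℕ)
    (τ : (Fin n → Bool) → ℕ) : 0 ≤ Phi p S m β τ := by
  apply Finset.sum_nonneg
  intro a _
  have := pr_nonneg hp a
  have := w_nonneg S m β a
  positivity

lemma sum_succ (p : Fin n → ℝ) (S : Finset (Fin n)) (m β : ℕ) (τ : (Fin n → Bool) → ℕ) :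
    ∑ a : Fin n → Bool, pr p a * (w S m β a * ((τ a : ℝ) + 1))
      = Phi p S m β τ + WS p S m β := by
  unfold Phi WS
  rw [← Finset.sum_add_distrib]
  apply Finset.sum_congr rfl
  intro a _
  ring

lemma stop_update {u : Fin n} {r : List (Fin n)} (hu : u ∉ r) (a : Fin n → Bool) (v : Bool)
    (m : ℕ) : stopCount (Function.update a u v) m r = stopCount a m r :=
  stop_congr m (fun i hi => Function.update_of_ne (fun h : i = u => hu (h ▸ hi)) v a)

/-- splitting the head off a list-order -/
lemma split_list (p : Fin n → ℝ) {u : Fin n} {r : List (Fin n)} (hnd : (u :: r).Nodup)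
    {m β : ℕ} (hm : 1 ≤ m) (hβ : 1 ≤ β) {S : Finset (Fin n)} (hS : S = (u :: r).toFinset) :
    Phi p S m β (fun a => stopCount a m (u :: r))
      = p u * (Phi p r.toFinset (m-1) (β-1) (fun a => stopCount a (m-1) r)
                + WS p r.toFinset (m-1) (β-1))
        + (1 - p u) * (Phi p r.toFinset m β (fun a => stopCount a m r)
                + WS p r.toFinset m β) := by
  have hur : u ∉ r := (List.nodup_cons.1 hnd).1
  have huS : u ∈ S := by rw [hS]; simp
  have hErase : S.erase u = r.toFinset := by
    rw [hS]
    simp only [List.toFinset_cons]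
    exact Finset.erase_insert (by simpa using hur)
  have key := split_gen p huS hm hβ (fun a => stopCount a m (u :: r))
    (fun a => stopCount a (m-1) r) (fun a => stopCount a m r)
    (fun a v => stop_update hur a v (m-1))
    (fun a v => stop_update hur a v m)
    (fun a hau hw => by
      have hcnt : m ≤ cnt a (u :: r) := by
        rw [cnt_eq_N1S hnd, ← hS]
        unfold w at hw
        by_contra h
        push_neg at h
        exact hw (if_neg (fun hc => by omega))
      have := stop_cons hm hcnt
      rw [hau] at this
      simpa using this)
    (fun a hau hw => by
      have hcnt : m ≤ cnt a (u :: r) := by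
        rw [cnt_eq_N1S hnd, ← hS]
        unfold w at hw
        by_contra h
        push_neg at h
        exact hw (if_neg (fun hc => by omega))
      have := stop_cons hm hcnt
      rw [hau] at this
      simpa using this)
  unfold Phi
  rw [key, hErase, sum_succ, sum_succ]
  rfl

lemma exists_sorted (p : Fin n → ℝ) (S : Finset (Fin n)) :
    ∃ l : List (Fin n), l.Nodup ∧ l.toFinset = S ∧ l.Pairwise (fun x y => p y ≤ p x) := by
  classical
  set le : Fin n → Fin n → Bool := fun x y => decide (p y ≤ p x) with hle
  refine ⟨S.toList.mergeSort le, ?_, ?_, ?_⟩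
  · exact (List.mergeSort_perm S.toList le).nodup_iff.2 S.nodup_toList
  · rw [List.toFinset_eq_of_perm _ _ (List.mergeSort_perm S.toList le)]
    exact S.toList_toFinset
  · have := List.pairwise_mergeSort (le := le)
      (fun a b c hab hbc => by
        simp only [hle, decide_eq_true_eq] at *
        linarith)
      (fun a b => by
        simp only [hle]
        rcases le_total (p b) (p a) with h | h
        · simp [h]
        · simp [h])
      S.toList
    refine this.imp ?_
    intro a b h
    simpa [hle] using h

lemma comb_le {c A B A' B' : ℝ} (hc0 : 0 ≤ c) (hc1 : c ≤ 1) (hA : A ≤ A') (hB : B ≤ B') :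
    c * A + (1 - c) * B ≤ c * A' + (1 - c) * B' := by nlinarith

/-- sorted order is optimal among nonadaptive orders -/
lemma nonad (p : Fin n → ℝ) (hp : ∀ i, 0 < p i ∧ p i < 1) :
    ∀ (k : ℕ) (S : Finset (Fin n)) (m β : ℕ) (l l' : List (Fin n)),
    S.card = k → l.Nodup → l.toFinset = S → l.Pairwise (fun x y => p y ≤ p x) →
    l'.Nodup → l'.toFinset = S →
    Phi p S m β (fun a => stopCount a m l) ≤ Phi p S m β (fun a => stopCount a m l') := by
  intro k
  induction k using Nat.strong_induction_on with
  | _ k IH =>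
  intro S m β l l' hcard hlnd hlS hlsort hl'nd hl'S
  -- trivial cases
  rcases Nat.eq_zero_or_pos m with rfl | hm
  · apply le_of_eq
    unfold Phi
    apply Finset.sum_congr rfl
    intro a _
    simp only [stop_zero]
  rcases Nat.eq_zero_or_pos β with rfl | hβ
  · apply le_of_eq
    unfold Phi
    apply Finset.sum_congr rfl
    intro a _
    have : w S m 0 a = 0 := by unfold w; rw [if_neg]; rintro ⟨-, h⟩; omega
    rw [this]
    ring
  match l', hl'nd, hl'S with
  | [], hl'nd, hl'S =>
    have : S = ∅ := by simpa using hl'S.symm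
    have : l = [] := by
      have := hlS.trans this
      exact List.toFinset_eq_empty_iff l |>.1 (by simpa using this)
    subst this
    exact le_rfl
  | v :: r', hl'nd, hl'S =>
    have hvS : v ∈ S := by rw [← hl'S]; simp
    match l, hlnd, hlS, hlsort with
    | [], hlnd, hlS, hlsort => exact absurd (hlS ▸ hvS) (by simp)
    | u :: r, hlnd, hlS, hlsort =>
      have huS : u ∈ S := by rw [← hlS]; simp
      have hur : u ∉ r := (List.nodup_cons.1 hlnd).1
      have hvr' : v ∉ r' := (List.nodup_cons.1 hl'nd).1
      have hrnd : r.Nodup := (List.nodup_cons.1 hlnd).2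
      have hr'nd : r'.Nodup := (List.nodup_cons.1 hl'nd).2
      have hrS : r.toFinset = S.erase u := by
        rw [← hlS]; simp only [List.toFinset_cons]
        exact (Finset.erase_insert (by simpa using hur)).symm
      have hr'S : r'.toFinset = S.erase v := by
        rw [← hl'S]; simp only [List.toFinset_cons]
        exact (Finset.erase_insert (by simpa using hvr')).symm
      have hrsort : r.Pairwise (fun x y => p y ≤ p x) := (List.pairwise_cons.1 hlsort).2
      have hcard' : ∀ x ∈ S, (S.erase x).card = k - 1 := by
        intro x hx
        rw [Finset.card_erase_of_mem hx, hcard]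
      have hk1 : k - 1 < k := by
        have : 0 < k := by rw [← hcard]; exact Finset.card_pos.2 ⟨u, huS⟩
        omega
      by_cases huv : u = v
      · -- same head
        subst huv
        rw [split_list p hlnd hm hβ hlS.symm, split_list p hl'nd hm hβ hl'S.symm]
        have h1 : Phi p r.toFinset (m-1) (β-1) (fun a => stopCount a (m-1) r)
            ≤ Phi p r.toFinset (m-1) (β-1) (fun a => stopCount a (m-1) r') := by
          have := IH (k-1) hk1 (S.erase u) (m-1) (β-1) r r' (hcard' u huS) hrnd hrS hrsort
            hr'nd hr'S
          rwa [← hrS] at this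
        have h2 : Phi p r.toFinset m β (fun a => stopCount a m r)
            ≤ Phi p r.toFinset m β (fun a => stopCount a m r') := by
          have := IH (k-1) hk1 (S.erase u) m β r r' (hcard' u huS) hrnd hrS hrsort hr'nd hr'S
          rwa [← hrS] at this
        have hWeq : r.toFinset = r'.toFinset := hrS.trans hr'S.symm
        rw [hWeq] at h1 h2 ⊢
        exact comb_le (le_of_lt (hp u).1) (le_of_lt (hp u).2) (by linarith) (by linarith)
      · -- different heads: u ≠ v
        have hvr : v ∈ r := by
          have : v ∈ (u :: r).toFinset := hlS ▸ hvS
          simp at this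
          tauto
        have hpvu : p v ≤ p u := (List.pairwise_cons.1 hlsort).1 v hvr
        have hu_ev : u ∈ S.erase v := Finset.mem_erase.2 ⟨huv, huS⟩
        have hv_eu : v ∈ S.erase u := Finset.mem_erase.2 ⟨fun h => huv h.symm, hvS⟩
        -- q : sorted list of (S.erase v).erase u
        obtain ⟨q, hqnd, hqS, hqsort⟩ := exists_sorted p ((S.erase v).erase u)
        have huq : u ∉ q := by
          intro h
          have := hqS ▸ (List.mem_toFinset.2 h)
          exact (Finset.notMem_erase u _) this
        have hvq : v ∉ q := by
          intro h
          have := hqS ▸ (List.mem_toFinset.2 h)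
          exact (Finset.notMem_erase v _) (Finset.mem_of_mem_erase this)
        have huq_sorted : (u :: q).Pairwise (fun x y => p y ≤ p x) := by
          refine List.pairwise_cons.2 ⟨?_, hqsort⟩
          intro x hx
          have hxS : x ∈ (S.erase v).erase u := hqS ▸ List.mem_toFinset.2 hx
          have hxr : x ∈ r := by
            have : x ∈ S.erase u := by
              rcases Finset.mem_erase.1 hxS with ⟨hxu, hxe⟩
              exact Finset.mem_erase.2 ⟨hxu, Finset.mem_of_mem_erase hxe⟩
            rw [← hrS] at this
            exact List.mem_toFinset.1 this
          exact (List.pairwise_cons.1 hlsort).1 x hxr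
        have huqnd : (u :: q).Nodup := List.nodup_cons.2 ⟨huq, hqnd⟩
        have huqS : (u :: q).toFinset = S.erase v := by
          simp only [List.toFinset_cons, hqS]
          exact Finset.insert_erase hu_ev
        have hvqnd : (v :: q).Nodup := List.nodup_cons.2 ⟨hvq, hqnd⟩
        have hvqS : (v :: q).toFinset = S.erase u := by
          simp only [List.toFinset_cons, hqS]
          rw [Finset.erase_right_comm]
          exact Finset.insert_erase hv_eu
        have hvuqnd : (v :: u :: q).Nodup := by
          refine List.nodup_cons.2 ⟨?_, huqnd⟩
          simp only [List.mem_cons]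
          rintro (h | h)
          · exact huv h.symm
          · exact hvq h
        have hvuqS : (v :: u :: q).toFinset = S := by
          simp only [List.toFinset_cons, hqS]
          rw [Finset.insert_erase hu_ev]
          exact Finset.insert_erase hvS
        have huvqnd : (u :: v :: q).Nodup := by
          refine List.nodup_cons.2 ⟨?_, hvqnd⟩
          simp only [List.mem_cons]
          rintro (h | h)
          · exact huv h
          · exact huq h
        have huvqS : (u :: v :: q).toFinset = S := by
          simp only [List.toFinset_cons, hqS]
          rw [Finset.erase_right_comm, Finset.insert_erase hv_eu]
          exact Finset.insert_erase huS
        -- Step A : RHS (v :: r') ≥ (v :: u :: q)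
        have stepA : Phi p S m β (fun a => stopCount a m (v :: u :: q))
            ≤ Phi p S m β (fun a => stopCount a m (v :: r')) := by
          rw [split_list p hvuqnd hm hβ hvuqS.symm, split_list p hl'nd hm hβ hl'S.symm]
          have h1 : Phi p (u :: q).toFinset (m-1) (β-1) (fun a => stopCount a (m-1) (u :: q))
              ≤ Phi p (u :: q).toFinset (m-1) (β-1) (fun a => stopCount a (m-1) r') := by
            have := IH (k-1) hk1 (S.erase v) (m-1) (β-1) (u :: q) r' (hcard' v hvS)
              huqnd huqS huq_sorted hr'nd hr'S
            rwa [← huqS] at this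
          have h2 : Phi p (u :: q).toFinset m β (fun a => stopCount a m (u :: q))
              ≤ Phi p (u :: q).toFinset m β (fun a => stopCount a m r') := by
            have := IH (k-1) hk1 (S.erase v) m β (u :: q) r' (hcard' v hvS)
              huqnd huqS huq_sorted hr'nd hr'S
            rwa [← huqS] at this
          have hWeq : (u :: q).toFinset = r'.toFinset := huqS.trans hr'S.symm
          rw [hWeq] at h1 h2 ⊢
          exact comb_le (le_of_lt (hp v).1) (le_of_lt (hp v).2) (by linarith) (by linarith)
        -- Step B : headswap
        have stepB : Phi p S m β (fun a => stopCount a m (u :: v :: q))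
            ≤ Phi p S m β (fun a => stopCount a m (v :: u :: q)) := by
          apply headswap p hp huv hpvu huq hvq m β S huS hvS
          intro a hw
          rw [cnt_eq_N1S hvuqnd, hvuqS]
          unfold w at hw
          by_contra h
          push_neg at h
          exact hw (if_neg (fun hc => by omega))
        -- Step C : LHS (u :: r) ≤ (u :: v :: q)
        have stepC : Phi p S m β (fun a => stopCount a m (u :: r))
            ≤ Phi p S m β (fun a => stopCount a m (u :: v :: q)) := by
          rw [split_list p hlnd hm hβ hlS.symm, split_list p huvqnd hm hβ huvqS.symm]
          have h1 : Phi p r.toFinset (m-1) (β-1) (fun a => stopCount a (m-1) r)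
              ≤ Phi p r.toFinset (m-1) (β-1) (fun a => stopCount a (m-1) (v :: q)) := by
            have := IH (k-1) hk1 (S.erase u) (m-1) (β-1) r (v :: q) (hcard' u huS)
              hrnd hrS hrsort hvqnd hvqS
            rwa [← hrS] at this
          have h2 : Phi p r.toFinset m β (fun a => stopCount a m r)
              ≤ Phi p r.toFinset m β (fun a => stopCount a m (v :: q)) := by
            have := IH (k-1) hk1 (S.erase u) m β r (v :: q) (hcard' u huS)
              hrnd hrS hrsort hvqnd hvqS
            rwa [← hrS] at this
          have hWeq : r.toFinset = (v :: q).toFinset := hrS.trans hvqS.symm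
          rw [hWeq] at h1 h2 ⊢
          exact comb_le (le_of_lt (hp u).1) (le_of_lt (hp u).2) (by linarith) (by linarith)
        exact le_trans stepC (le_trans stepB stepA)

end S5

section S6
variable {n : ℕ}

lemma compl_erase' (S : Finset (Fin n)) (u : Fin n) : (S.erase u)ᶜ = insert u Sᶜ := by
  ext x
  simp [Finset.mem_erase, Finset.mem_insert, Finset.mem_compl]

lemma stop_path_update {t : DTree n} {S : Finset (Fin n)} {i₀ : Fin n}
    (hprop : t.Proper (insert i₀ Sᶜ)) (m : ℕ) (a : Fin n → Bool) (v : Bool) :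
    stopCount (Function.update a i₀ v) m (t.path (Function.update a i₀ v))
      = stopCount a m (t.path a) := by
  have hpath : t.path (Function.update a i₀ v) = t.path a := by
    apply path_congr_off hprop
    intro i hi
    have : i ≠ i₀ := fun h => hi (h ▸ Finset.mem_insert_self i₀ Sᶜ)
    exact (Function.update_of_ne this v a).symm
  rw [hpath]
  apply stop_congr
  intro i hi
  have hin : i ∉ insert i₀ Sᶜ := path_avoids hprop a i hi
  have : i ≠ i₀ := fun h => hin (h ▸ Finset.mem_insert_self i₀ Sᶜ)
  exact (Function.update_of_ne this v a)

lemma split_tree (p : Fin n → ℝ) {i₀ : Fin n} {t0 t1 : DTree n} {S : Finset (Fin n)}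
    (hprop : (DTree.node i₀ t0 t1).Proper Sᶜ) {m β : ℕ} (hm : 1 ≤ m) (hβ : 1 ≤ β)
    (hones : ∀ a, w S m β a ≠ 0 → m ≤ cnt a ((DTree.node i₀ t0 t1).path a)) :
    Phi p S m β (fun a => stopCount a m ((DTree.node i₀ t0 t1).path a))
      = p i₀ * (Phi p (S.erase i₀) (m-1) (β-1) (fun a => stopCount a (m-1) (t1.path a))
              + WS p (S.erase i₀) (m-1) (β-1))
        + (1 - p i₀) * (Phi p (S.erase i₀) m β (fun a => stopCount a m (t0.path a))
              + WS p (S.erase i₀) m β) := by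
  obtain ⟨hi₀, h0, h1⟩ := hprop
  have hi₀S : i₀ ∈ S := by simpa using hi₀
  have key := split_gen p hi₀S hm hβ
    (fun a => stopCount a m ((DTree.node i₀ t0 t1).path a))
    (fun a => stopCount a (m-1) (t1.path a))
    (fun a => stopCount a m (t0.path a))
    (fun a v => stop_path_update h1 (m-1) a v)
    (fun a v => stop_path_update h0 m a v)
    (fun a hau hw => by
      have hpath : (DTree.node i₀ t0 t1).path a = i₀ :: t1.path a := by
        simp [DTree.path, hau]
      have hcnt := hones a hw
      show stopCount a m ((DTree.node i₀ t0 t1).path a) = stopCount a (m-1) (t1.path a) + 1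
      rw [hpath] at hcnt ⊢
      have := stop_cons hm hcnt
      rw [hau] at this
      simpa using this)
    (fun a hau hw => by
      have hpath : (DTree.node i₀ t0 t1).path a = i₀ :: t0.path a := by
        simp [DTree.path, hau]
      have hcnt := hones a hw
      show stopCount a m ((DTree.node i₀ t0 t1).path a) = stopCount a m (t0.path a) + 1
      rw [hpath] at hcnt ⊢
      have := stop_cons hm hcnt
      rw [hau] at this
      simpa using this)
  unfold Phi
  rw [key, sum_succ, sum_succ]
  rfl

lemma main_lemma (p : Fin n → ℝ) (hp : ∀ i, 0 < p i ∧ p i < 1) :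
    ∀ (k : ℕ) (S : Finset (Fin n)) (m β : ℕ) (T : DTree n) (l : List (Fin n)),
    S.card = k → T.Proper Sᶜ →
    (∀ a : Fin n → Bool, w S m β a ≠ 0 → m ≤ cnt a (T.path a)) →
    l.Nodup → l.toFinset = S → l.Pairwise (fun x y => p y ≤ p x) →
    Phi p S m β (fun a => stopCount a m l)
      ≤ Phi p S m β (fun a => stopCount a m (T.path a)) := by
  intro k
  induction k using Nat.strong_induction_on with
  | _ k IH =>
  intro S m β T l hcard hprop hones hlnd hlS hlsort
  rcases Nat.eq_zero_or_pos m with rfl | hm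
  · have : Phi p S 0 β (fun a => stopCount a 0 l) = 0 := by
      unfold Phi
      apply Finset.sum_eq_zero
      intro a _
      simp [stop_zero]
    rw [this]
    exact Phi_nonneg hp _ _ _ _
  rcases Nat.eq_zero_or_pos β with rfl | hβ
  · have hw0 : ∀ a : Fin n → Bool, w S m 0 a = 0 := by
      intro a
      unfold w
      rw [if_neg]
      rintro ⟨-, h⟩
      omega
    have : Phi p S m 0 (fun a => stopCount a m l) = 0 := by
      unfold Phi
      apply Finset.sum_eq_zero
      intro a _
      rw [hw0 a]
      ring
    rw [this]
    exact Phi_nonneg hp _ _ _ _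
  match T, hprop, hones with
  | .leaf v, hprop, hones =>
    have hw0 : ∀ a : Fin n → Bool, w S m β a = 0 := by
      intro a
      by_contra h
      have := hones a h
      simp [DTree.path, cnt] at this
      omega
    have hzero : ∀ τ : (Fin n → Bool) → ℕ, Phi p S m β τ = 0 := by
      intro τ
      unfold Phi
      apply Finset.sum_eq_zero
      intro a _
      rw [hw0 a]
      ring
    rw [hzero, hzero]
  | .node i₀ t0 t1, hprop, hones =>
    obtain ⟨hi₀, h0, h1⟩ := hprop
    have hi₀S : i₀ ∈ S := by simpa using hi₀
    have hk1 : k - 1 < k := by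
      have : 0 < k := by rw [← hcard]; exact Finset.card_pos.2 ⟨i₀, hi₀S⟩
      omega
    have hcard' : (S.erase i₀).card = k - 1 := by
      rw [Finset.card_erase_of_mem hi₀S, hcard]
    have hcompl : (S.erase i₀)ᶜ = insert i₀ Sᶜ := compl_erase' S i₀
    have hprop1 : t1.Proper (S.erase i₀)ᶜ := by rw [hcompl]; exact h1
    have hprop0 : t0.Proper (S.erase i₀)ᶜ := by rw [hcompl]; exact h0
    -- path of subtrees does not involve i₀, values agree
    have hpath1 : ∀ (a : Fin n → Bool) (v : Bool),
        t1.path (Function.update a i₀ v) = t1.path a := by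
      intro a v
      apply path_congr_off h1
      intro i hi
      have : i ≠ i₀ := fun h => hi (h ▸ Finset.mem_insert_self i₀ Sᶜ)
      exact (Function.update_of_ne this v a).symm
    have hpath0 : ∀ (a : Fin n → Bool) (v : Bool),
        t0.path (Function.update a i₀ v) = t0.path a := by
      intro a v
      apply path_congr_off h0
      intro i hi
      have : i ≠ i₀ := fun h => hi (h ▸ Finset.mem_insert_self i₀ Sᶜ)
      exact (Function.update_of_ne this v a).symm
    -- ones hypotheses for subtrees
    have hones1 : ∀ a : Fin n → Bool, w (S.erase i₀) (m-1) (β-1) a ≠ 0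
        → m - 1 ≤ cnt a (t1.path a) := by
      intro a hw
      set a' := Function.update a i₀ true with ha'
      have hw' : w (S.erase i₀) (m-1) (β-1) a' ≠ 0 := by
        rw [ha', w_update (Finset.notMem_erase i₀ S)]
        exact hw
      have ha'i₀ : a' i₀ = true := by rw [ha']; simp
      have hwS : w S m β a' ≠ 0 := by
        rw [w_shift_true hi₀S hm hβ ha'i₀]
        exact hw'
      have hone := hones a' hwS
      have hpatheq : (DTree.node i₀ t0 t1).path a' = i₀ :: t1.path a' := by
        simp [DTree.path, ha'i₀]
      rw [hpatheq, cnt_cons, ha'i₀, hpath1 a true] at hone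
      have hcnteq : cnt a' (t1.path a) = cnt a (t1.path a) := by
        apply cnt_congr
        intro i hi
        have hin : i ∉ insert i₀ Sᶜ := path_avoids h1 a i hi
        have : i ≠ i₀ := fun h => hin (h ▸ Finset.mem_insert_self i₀ Sᶜ)
        exact (Function.update_of_ne this true a)
      rw [hcnteq] at hone
      simp at hone
      omega
    have hones0 : ∀ a : Fin n → Bool, w (S.erase i₀) m β a ≠ 0
        → m ≤ cnt a (t0.path a) := by
      intro a hw
      set a' := Function.update a i₀ false with ha'
      have hw' : w (S.erase i₀) m β a' ≠ 0 := by
        rw [ha', w_update (Finset.notMem_erase i₀ S)]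
        exact hw
      have ha'i₀ : a' i₀ = false := by rw [ha']; simp
      have hwS : w S m β a' ≠ 0 := by
        rw [w_shift_false hi₀S ha'i₀]
        exact hw'
      have hone := hones a' hwS
      have hpatheq : (DTree.node i₀ t0 t1).path a' = i₀ :: t0.path a' := by
        simp [DTree.path, ha'i₀]
      rw [hpatheq, cnt_cons, ha'i₀, hpath0 a false] at hone
      have hcnteq : cnt a' (t0.path a) = cnt a (t0.path a) := by
        apply cnt_congr
        intro i hi
        have hin : i ∉ insert i₀ Sᶜ := path_avoids h0 a i hi
        have : i ≠ i₀ := fun h => hin (h ▸ Finset.mem_insert_self i₀ Sᶜ)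
        exact (Function.update_of_ne this false a)
      rw [hcnteq] at hone
      simp at hone
      omega
    -- sorted list for S.erase i₀
    obtain ⟨l₁, hl₁nd, hl₁S, hl₁sort⟩ := exists_sorted p (S.erase i₀)
    have hi₀l₁ : i₀ ∉ l₁ := by
      intro h
      exact (Finset.notMem_erase i₀ S) (hl₁S ▸ List.mem_toFinset.2 h)
    have hil₁nd : (i₀ :: l₁).Nodup := List.nodup_cons.2 ⟨hi₀l₁, hl₁nd⟩
    have hil₁S : (i₀ :: l₁).toFinset = S := by
      simp only [List.toFinset_cons, hl₁S]
      exact Finset.insert_erase hi₀S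
    -- step 1 : nonadaptive comparison l vs i₀ :: l₁
    have step1 : Phi p S m β (fun a => stopCount a m l)
        ≤ Phi p S m β (fun a => stopCount a m (i₀ :: l₁)) :=
      nonad p hp k S m β l (i₀ :: l₁) hcard hlnd hlS hlsort hil₁nd hil₁S
    -- step 2 : split the list i₀ :: l₁ and the tree, and use IH
    have step2 : Phi p S m β (fun a => stopCount a m (i₀ :: l₁))
        ≤ Phi p S m β (fun a => stopCount a m ((DTree.node i₀ t0 t1).path a)) := by
      rw [split_list p hil₁nd hm hβ hil₁S.symm, split_tree p ⟨hi₀, h0, h1⟩ hm hβ hones]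
      rw [hl₁S]
      have ih1 : Phi p (S.erase i₀) (m-1) (β-1) (fun a => stopCount a (m-1) l₁)
          ≤ Phi p (S.erase i₀) (m-1) (β-1) (fun a => stopCount a (m-1) (t1.path a)) :=
        IH (k-1) hk1 (S.erase i₀) (m-1) (β-1) t1 l₁ hcard' hprop1 hones1 hl₁nd hl₁S hl₁sort
      have ih0 : Phi p (S.erase i₀) m β (fun a => stopCount a m l₁)
          ≤ Phi p (S.erase i₀) m β (fun a => stopCount a m (t0.path a)) :=
        IH (k-1) hk1 (S.erase i₀) m β t0 l₁ hcard' hprop0 hones0 hl₁nd hl₁S hl₁sort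
      exact comb_le (le_of_lt (hp i₀).1) (le_of_lt (hp i₀).2) (by linarith) (by linarith)
    exact le_trans step1 step2
end S6

section S7
variable {n : ℕ}

lemma w_cond {S : Finset (Fin n)} {m β : ℕ} {a : Fin n → Bool} (hw : w S m β a ≠ 0) :
    m ≤ N1S S a ∧ N1S S a < β := by
  unfold w at hw
  by_contra h
  exact hw (if_neg h)

lemma w_of_cond {S : Finset (Fin n)} {m β : ℕ} {a : Fin n → Bool}
    (h : m ≤ N1S S a ∧ N1S S a < β) : w S m β a = 1 := if_pos h

/-- the uniqueness of the block index -/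
lemma block_unique {B : ℕ} (α : ℕ → ℕ)
    (hmono : ∀ j, 1 ≤ j → j ≤ B → α j < α (j + 1))
    {j j' : ℕ} (hj1 : 1 ≤ j) (hjB : j ≤ B) (hj1' : 1 ≤ j') (hjB' : j' ≤ B)
    {N : ℕ} (h1 : α j ≤ N) (h2 : N < α (j + 1)) (h1' : α j' ≤ N) (h2' : N < α (j' + 1)) :
    j = j' := by
  have αmono : ∀ t : ℕ, t ≤ B + 1 → ∀ s : ℕ, 1 ≤ s → s ≤ t → α s ≤ α t := by
    intro t
    induction t with
    | zero => intro _ s hs hst; exact absurd hst (by omega)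
    | succ t ih =>
      intro htB s hs hst
      rcases Nat.eq_or_lt_of_le hst with heq | hlt
      · rw [heq]
      · have hst' : s ≤ t := by omega
        have ha : α s ≤ α t := ih (by omega) s hs hst'
        have hb : α t < α (t + 1) := hmono t (by omega) (by omega)
        omega
  by_contra hne
  rcases Nat.lt_or_ge j j' with hlt | hge
  · have : α (j + 1) ≤ α j' := αmono j' (by omega) (j + 1) (by omega) (by omega)
    omega
  · have hlt : j' < j := by omega
    have : α (j' + 1) ≤ α j := αmono j (by omega) (j' + 1) (by omega) (by omega)
    omega

lemma N1_restrict_false {T : DTree n} (hTp : T.Proper ∅) (a : Fin n → Bool) :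
    N1 (fun i => if i ∈ T.path a then a i else false) = cnt a (T.path a) := by
  classical
  unfold N1 cnt
  have hset : Finset.univ.filter
      (fun i => (if i ∈ T.path a then a i else false) = true)
      = ((T.path a).filter a).toFinset := by
    ext i
    simp only [Finset.mem_filter, Finset.mem_univ, true_and, List.mem_toFinset,
      List.mem_filter]
    constructor
    · intro h
      by_cases hm : i ∈ T.path a
      · rw [if_pos hm] at h; exact ⟨hm, h⟩
      · rw [if_neg hm] at h; exact absurd h (by simp)
    · rintro ⟨hm, hv⟩
      rw [if_pos hm]; exact hv
  rw [hset]
  exact List.toFinset_card_of_nodup ((path_nodup hTp a).filter a)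

lemma N1_restrict_true {T : DTree n} (hTp : T.Proper ∅) (a : Fin n → Bool) :
    N1 (fun i => if i ∈ T.path a then a i else true)
      = cnt a (T.path a) + (n - (T.path a).length) := by
  classical
  unfold N1 cnt
  have hset : Finset.univ.filter
      (fun i => (if i ∈ T.path a then a i else true) = true)
      = ((T.path a).filter a).toFinset ∪ ((T.path a).toFinset)ᶜ := by
    ext i
    simp only [Finset.mem_filter, Finset.mem_univ, true_and, Finset.mem_union,
      List.mem_toFinset, List.mem_filter, Finset.mem_compl]
    by_cases hm : i ∈ T.path a
    · rw [if_pos hm]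
      simp [hm]
    · rw [if_neg hm]
      simp [hm]
  rw [hset, Finset.card_union_of_disjoint]
  · congr 1
    · exact List.toFinset_card_of_nodup ((path_nodup hTp a).filter a)
    · rw [Finset.card_compl]
      congr 1
      · simp
      · exact List.toFinset_card_of_nodup (path_nodup hTp a)
  · apply disjoint_compl_right_iff.mpr
    intro i hi
    simp only [List.mem_toFinset, List.mem_filter] at hi ⊢
    exact hi.1

lemma cnt_not_add (a : Fin n → Bool) (l : List (Fin n)) :
    cnt a l + cnt (fun i => !a i) l = l.length := by
  unfold cnt
  exact (List.length_eq_length_filter_add (l := l) a).symm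

/-- certification: enough ones and zeros are observed on every path of a correct tree -/
lemma certify {B : ℕ} (α : ℕ → ℕ)
    (hmono : ∀ j, 1 ≤ j → j ≤ B → α j < α (j + 1))
    (f : (Fin n → Bool) → ℕ)
    (hf : ∀ a, 1 ≤ f a ∧ f a ≤ B ∧ α (f a) ≤ N1 a ∧ N1 a < α (f a + 1))
    {j : ℕ} (hj1 : 1 ≤ j) (hjB : j ≤ B)
    {T : DTree n} (hTp : T.Proper ∅) (hTe : ∀ a, T.eval a = f a)
    (a : Fin n → Bool) (ha1 : α j ≤ N1 a) (ha2 : N1 a < α (j + 1)) :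
    α j ≤ cnt a (T.path a) ∧ n + 1 - α (j + 1) ≤ cnt (fun i => !a i) (T.path a) := by
  classical
  have hfa : f a = j := by
    obtain ⟨h1, h2, h3, h4⟩ := hf a
    exact block_unique α hmono h1 h2 hj1 hjB h3 h4 ha1 ha2
  constructor
  · -- ones
    set a' : Fin n → Bool := fun i => if i ∈ T.path a then a i else false with ha'
    have hagree : ∀ i ∈ T.path a, a i = a' i := by
      intro i hi
      rw [ha']
      simp [hi]
    obtain ⟨hpath, heval⟩ := path_eval_congr hagree
    have hfa' : f a' = j := by rw [← hTe, heval, hTe, hfa]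
    have := (hf a').2.2.1
    rw [hfa', N1_restrict_false hTp a] at this
    exact this
  · -- zeros
    set a'' : Fin n → Bool := fun i => if i ∈ T.path a then a i else true with ha''
    have hagree : ∀ i ∈ T.path a, a i = a'' i := by
      intro i hi
      rw [ha'']
      simp [hi]
    obtain ⟨hpath, heval⟩ := path_eval_congr hagree
    have hfa'' : f a'' = j := by rw [← hTe, heval, hTe, hfa]
    have hup := (hf a'').2.2.2
    rw [hfa'', N1_restrict_true hTp a] at hup
    have hsplit := cnt_not_add a (T.path a)
    have hlen : (T.path a).length ≤ n := by
      rw [← List.toFinset_card_of_nodup (path_nodup hTp a)]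
      have := Finset.card_le_univ ((T.path a).toFinset)
      simpa using this
    omega

end S7

section S8
variable {n : ℕ}

def flipT : DTree n → DTree n
  | .leaf v => .leaf v
  | .node i t0 t1 => .node i (flipT t1) (flipT t0)

lemma flipT_path (t : DTree n) (a : Fin n → Bool) :
    (flipT t).path a = t.path (fun i => !a i) := by
  induction t with
  | leaf v => rfl
  | node i t0 t1 ih0 ih1 =>
    show (DTree.node i (flipT t1) (flipT t0)).path a = _
    simp only [DTree.path]
    by_cases hai : a i
    · rw [if_pos hai, if_neg (by simp [hai]), ih0]
    · have : a i = false := by simpa using hai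
      rw [if_neg hai, if_pos (by simp [this]), ih1]

lemma flipT_proper {t : DTree n} {used : Finset (Fin n)} (h : t.Proper used) :
    (flipT t).Proper used := by
  induction t generalizing used with
  | leaf v => trivial
  | node i t0 t1 ih0 ih1 =>
    obtain ⟨hi, h0, h1⟩ := h
    exact ⟨hi, ih1 h1, ih0 h0⟩

/-- negation as an equivalence on assignments -/
def negA : (Fin n → Bool) ≃ (Fin n → Bool) where
  toFun a := fun i => !a i
  invFun a := fun i => !a i
  left_inv a := by funext i; simp
  right_inv a := by funext i; simp

lemma N1S_univ (a : Fin n → Bool) : N1S Finset.univ a = N1 a := rfl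

lemma N1_le_n (a : Fin n → Bool) : N1 a ≤ n := by
  unfold N1
  have := Finset.card_filter_le Finset.univ (fun i : Fin n => a i = true)
  simpa using this

lemma N1_neg (b : Fin n → Bool) : N1 (fun i => !b i) = n - N1 b := by
  unfold N1
  have hset : Finset.univ.filter (fun i => (!b i) = true)
      = (Finset.univ.filter (fun i => b i = true))ᶜ := by
    ext i
    simp
  rw [hset, Finset.card_compl]
  simp [N1]

lemma pr_neg (p : Fin n → ℝ) (b : Fin n → Bool) :
    pr p (negA b) = pr (fun i => 1 - p i) b := by
  unfold pr
  apply Finset.prod_congr rfl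
  intro i _
  show (if (!b i) = true then p i else 1 - p i) = _
  cases hb : b i <;> simp [hb] <;> ring_nf

lemma w_neg (αj βj : ℕ) (b : Fin n → Bool) :
    w Finset.univ αj βj (negA b) = w Finset.univ (n + 1 - βj) (n + 1 - αj) b := by
  unfold w
  rw [show N1S Finset.univ (negA b) = N1 (fun i => !b i) from rfl, N1_neg, N1S_univ]
  have hb := N1_le_n b
  apply if_congr _ rfl rfl
  omega

lemma reindex_neg (p : Fin n → ℝ) (αj βj : ℕ) (F : (Fin n → Bool) → ℝ) :
    ∑ a : Fin n → Bool, pr p a * (w Finset.univ αj βj a * F (fun i => !a i))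
      = ∑ b : Fin n → Bool,
          pr (fun i => 1 - p i) b * (w Finset.univ (n + 1 - βj) (n + 1 - αj) b * F b) := by
  rw [← Equiv.sum_comp (negA (n := n))
    (fun b => pr p b * (w Finset.univ αj βj b * F (fun i => !b i)))]
  apply Finset.sum_congr rfl
  intro b _
  have h1 : (fun i => !((negA b) i)) = b := by
    funext i
    show (!(!b i)) = b i
    simp
  show pr p (negA b) * (w Finset.univ αj βj (negA b) * F (fun i => !(negA b) i)) = _
  rw [pr_neg, w_neg, h1]

end S8

theorem stmt4 {n : ℕ} (hn : 1 ≤ n) (p c : Fin n → ℝ)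
    (hp : ∀ i, 0 < p i ∧ p i < 1) (hc : ∀ i, c i = 1)
    (B : ℕ) (hB : 2 ≤ B) (α : ℕ → ℕ)
    (hα1 : α 1 = 0) (hαtop : α (B + 1) = n + 1)
    (hmono : ∀ j, 1 ≤ j → j ≤ B → α j < α (j + 1))
    (f : (Fin n → Bool) → ℕ)
    (hf : ∀ a, 1 ≤ f a ∧ f a ≤ B ∧ α (f a) ≤ N1 a ∧ N1 a < α (f a + 1))
    (j : ℕ) (hj1 : 1 ≤ j) (hjB : j ≤ B)
    (σ1 σ0 : Equiv.Perm (Fin n))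
    (hσ1 : ∀ s t : Fin n, s ≤ t → p (σ1 t) ≤ p (σ1 s))
    (hσ0 : ∀ s t : Fin n, s ≤ t → p (σ0 s) ≤ p (σ0 t))
    (T : DTree n) (hTp : T.Proper ∅) (hTe : ∀ a, T.eval a = f a) :
    C1 p (α j) (α (j + 1)) σ1 ≤
      (∑ a ∈ Finset.univ.filter (fun a : Fin n → Bool => α j ≤ N1 a ∧ N1 a < α (j + 1)),
        T.cost c a * pr p a) ∧
    C0 p (α j) (α (j + 1)) σ0 ≤
      (∑ a ∈ Finset.univ.filter (fun a : Fin n → Bool => α j ≤ N1 a ∧ N1 a < α (j + 1)),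
        T.cost c a * pr p a) := by
  classical
  set αj := α j with hαj
  set βj := α (j + 1) with hβj
  have hTpu : T.Proper Finset.univᶜ := by
    have h : (Finset.univ : Finset (Fin n))ᶜ = ∅ := Finset.compl_univ
    rw [h]
    exact hTp
  have hwcond : ∀ a : Fin n → Bool, w Finset.univ αj βj a ≠ 0
      → αj ≤ N1 a ∧ N1 a < βj := fun a hw => by
    have := w_cond hw
    rwa [N1S_univ] at this
  -- certification
  have hcert := fun (a : Fin n → Bool) (h1 : αj ≤ N1 a) (h2 : N1 a < βj) =>
    certify α hmono f hf hj1 hjB hTp hTe a h1 h2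
  -- tree-side sum identity
  have hcostsum : (∑ a ∈ Finset.univ.filter
        (fun a : Fin n → Bool => αj ≤ N1 a ∧ N1 a < βj), T.cost c a * pr p a)
      = ∑ a : Fin n → Bool, pr p a * (w Finset.univ αj βj a * ((T.path a).length : ℝ)) := by
    rw [Finset.sum_filter]
    apply Finset.sum_congr rfl
    intro a _
    by_cases h : αj ≤ N1 a ∧ N1 a < βj
    · rw [if_pos h, cost_eq_length hc]
      unfold w
      rw [N1S_univ, if_pos h]
      ring
    · rw [if_neg h]
      unfold w
      rw [N1S_univ, if_neg h]
      ring
  constructor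
  · -- C1 part
    set L1 : List (Fin n) := List.ofFn (fun t => σ1 t) with hL1
    have hL1nd : L1.Nodup := List.nodup_ofFn.2 σ1.injective
    have hL1S : L1.toFinset = Finset.univ := by
      ext x
      simp only [List.mem_toFinset, hL1, List.mem_ofFn, Finset.mem_univ, iff_true]
      exact ⟨σ1.symm x, by simp⟩
    have hL1sort : L1.Pairwise (fun x y => p y ≤ p x) :=
      List.pairwise_ofFn.2 (fun i j hij => hσ1 i j (le_of_lt hij))
    have hones : ∀ a : Fin n → Bool, w Finset.univ αj βj a ≠ 0
        → αj ≤ cnt a (T.path a) := by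
      intro a hw
      obtain ⟨h1, h2⟩ := hwcond a hw
      exact (hcert a h1 h2).1
    have hC1 : C1 p αj βj σ1 = Phi p Finset.univ αj βj (fun a => stopCount a αj L1) := by
      unfold C1 Phi
      rw [Finset.sum_filter]
      apply Finset.sum_congr rfl
      intro a _
      by_cases h : αj ≤ N1 a ∧ N1 a < βj
      · rw [if_pos h]
        unfold w
        rw [N1S_univ, if_pos h]
        ring
      · rw [if_neg h]
        unfold w
        rw [N1S_univ, if_neg h]
        ring
    have hmain := main_lemma p hp (Finset.univ.card) Finset.univ αj βj T L1 rfl hTpu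
      hones hL1nd hL1S hL1sort
    have hfinal : Phi p Finset.univ αj βj (fun a => stopCount a αj (T.path a))
        ≤ ∑ a : Fin n → Bool, pr p a * (w Finset.univ αj βj a * ((T.path a).length : ℝ)) := by
      unfold Phi
      apply Finset.sum_le_sum
      intro a _
      by_cases hw : w Finset.univ αj βj a = 0
      · rw [hw]
        exact le_of_eq (by ring)
      · have h1 := hones a hw
        have hsl : ((stopCount a αj (T.path a) : ℝ)) ≤ ((T.path a).length : ℝ) :=
          Nat.cast_le.2 (stop_le_length h1)
        have hpn := pr_nonneg hp a
        have hwn := w_nonneg Finset.univ αj βj a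
        show pr p a * (w Finset.univ αj βj a * (stopCount a αj (T.path a) : ℝ))
          ≤ pr p a * (w Finset.univ αj βj a * ((T.path a).length : ℝ))
        exact mul_le_mul_of_nonneg_left (mul_le_mul_of_nonneg_left hsl hwn) hpn
    rw [hC1, hcostsum]
    exact le_trans hmain hfinal
  · -- C0 part
    set m₀ := n + 1 - βj with hm₀
    set β' := n + 1 - αj with hβ'
    set p' : Fin n → ℝ := fun i => 1 - p i with hp'def
    have hp' : ∀ i, 0 < p' i ∧ p' i < 1 := by
      intro i
      rcases hp i with ⟨h1, h2⟩
      constructor <;> simp [hp'def] <;> linarith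
    set L0 : List (Fin n) := List.ofFn (fun t => σ0 t) with hL0
    have hL0nd : L0.Nodup := List.nodup_ofFn.2 σ0.injective
    have hL0S : L0.toFinset = Finset.univ := by
      ext x
      simp only [List.mem_toFinset, hL0, List.mem_ofFn, Finset.mem_univ, iff_true]
      exact ⟨σ0.symm x, by simp⟩
    have hL0sort : L0.Pairwise (fun x y => p' y ≤ p' x) :=
      List.pairwise_ofFn.2 (fun i j hij => by
        have := hσ0 i j (le_of_lt hij)
        simp only [hp'def]
        linarith)
    set T' := flipT T with hT'
    have hT'p : T'.Proper Finset.univᶜ := flipT_proper hTpu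
    -- translate the block condition
    have hblock : ∀ b : Fin n → Bool, w Finset.univ m₀ β' b ≠ 0
        → αj ≤ N1 (fun i => !b i) ∧ N1 (fun i => !b i) < βj := by
      intro b hw
      have hcond := w_cond hw
      rw [N1S_univ] at hcond
      rw [N1_neg]
      have := N1_le_n b
      constructor <;> omega
    have hones' : ∀ b : Fin n → Bool, w Finset.univ m₀ β' b ≠ 0
        → m₀ ≤ cnt b (T'.path b) := by
      intro b hw
      obtain ⟨h1, h2⟩ := hblock b hw
      have hz := (hcert (fun i => !b i) h1 h2).2
      have hbb : (fun i => !(!b i)) = b := by funext i; simp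
      rw [hbb] at hz
      rw [hT', flipT_path]
      exact hz
    have hC0 : C0 p αj βj σ0 = Phi p' Finset.univ m₀ β' (fun b => stopCount b m₀ L0) := by
      unfold C0 Phi
      rw [Finset.sum_filter]
      have step : ∑ a : Fin n → Bool,
          (if αj ≤ N1 a ∧ N1 a < βj then
            (stopCount (fun i => !a i) m₀ L0 : ℝ) * pr p a else 0)
          = ∑ a : Fin n → Bool, pr p a * (w Finset.univ αj βj a
              * ((fun x : Fin n → Bool => (stopCount x m₀ L0 : ℝ)) (fun i => !a i))) := by
        apply Finset.sum_congr rfl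
        intro a _
        by_cases h : αj ≤ N1 a ∧ N1 a < βj
        · rw [if_pos h]
          unfold w
          rw [N1S_univ, if_pos h]
          ring
        · rw [if_neg h]
          unfold w
          rw [N1S_univ, if_neg h]
          ring
      rw [step, reindex_neg p αj βj (fun x => (stopCount x m₀ L0 : ℝ))]
    have hmain := main_lemma p' hp' (Finset.univ.card) Finset.univ m₀ β' T' L0 rfl hT'p
      hones' hL0nd hL0S hL0sort
    have hfinal : Phi p' Finset.univ m₀ β' (fun b => stopCount b m₀ (T'.path b))
        ≤ ∑ b : Fin n → Bool, pr p' b * (w Finset.univ m₀ β' b * ((T'.path b).length : ℝ)) := by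
      unfold Phi
      apply Finset.sum_le_sum
      intro b _
      by_cases hw : w Finset.univ m₀ β' b = 0
      · rw [hw]
        exact le_of_eq (by ring)
      · have h1 := hones' b hw
        have hsl : ((stopCount b m₀ (T'.path b) : ℝ)) ≤ ((T'.path b).length : ℝ) :=
          Nat.cast_le.2 (stop_le_length h1)
        have hpn := pr_nonneg hp' b
        have hwn := w_nonneg Finset.univ m₀ β' b
        show pr p' b * (w Finset.univ m₀ β' b * (stopCount b m₀ (T'.path b) : ℝ))
          ≤ pr p' b * (w Finset.univ m₀ β' b * ((T'.path b).length : ℝ))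
        exact mul_le_mul_of_nonneg_left (mul_le_mul_of_nonneg_left hsl hwn) hpn
    have hback : ∑ b : Fin n → Bool, pr p' b * (w Finset.univ m₀ β' b * ((T'.path b).length : ℝ))
        = ∑ a : Fin n → Bool, pr p a * (w Finset.univ αj βj a * ((T.path a).length : ℝ)) := by
      rw [← reindex_neg p αj βj (fun x => ((T'.path x).length : ℝ))]
      apply Finset.sum_congr rfl
      intro a _
      have : T'.path (fun i => !a i) = T.path a := by
        rw [hT', flipT_path]
        congr 1
        funext i
        simp
      rw [this]
    rw [hC0, hcostsum, ← hback]
    exact le_trans hmain hfinal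
end
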